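/- For every prime power q > 3, the maximum size of a set of pairwise non-commuting elements of PGL(2,q) equals q² + q + 1. -/

import Mathlib

/-- A finset of group elements is pairwise non-commuting. -/
def pwNC {G : Type*} [Group G] (s : Finset G) : Prop :=
  (s : Set G).Pairwise fun a b => a * b ≠ b * a

/-- ω(G): the maximum size of a set of pairwise non-commuting elements of `G`. -/
noncomputable def omegaNC (G : Type*) [Group G] : ℕ :=
  sSup {n : ℕ | ∃ s : Finset G, pwNC s ∧ s.card = n}

/-!
Modulo scalar matrices, a `2 × 2` matrix `x` is recorded by `v(x) = (x₀₁, x₁₀, x₀₀ - x₁₁)`, and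
`xy - yx` has the entries of the cross product `v(x) × v(y)`. So two matrices commute iff their
vectors are proportional. If `g, h ∈ GL(2, q)` commute in `PGL(2, q)`, then `hg = c • gh`; the
determinant gives `c² = 1`, which settles characteristic `2`, and the trace gives `c tr g = tr g`,
which settles odd characteristic when `tr g ≠ 0`. Then `g, h` commute in `GL(2, q)`.

A pairwise non-commuting set in `PGL(2, q)` therefore injects into the projective plane over
`𝔽_q`, which has `q² + q + 1` points. Conversely, each point is `v(g)` for some `g` with nonzero
determinant and, in odd characteristic, nonzero trace: this avoids at most three values of a
parameter, which is possible when `q > 3`. These `q² + q + 1` elements are pairwise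
non-commuting in `PGL(2, q)`.
-/

open Matrix Polynomial
open scoped LinearAlgebra.Projectivization

theorem omegaNC_eq {G : Type*} [Group G] {n : ℕ}
    (hle : ∀ s : Finset G, pwNC s → s.card ≤ n)
    (hex : ∃ s : Finset G, pwNC s ∧ s.card = n) :
    omegaNC G = n :=
  IsGreatest.csSup_eq ⟨hex, fun _ ⟨s, hs, hcard⟩ => hcard ▸ hle s hs⟩

theorem exists_pwNC_card_eq_of_pairwise {G ι : Type*} [Group G] [Finite ι] (f : ι → G)
    (hf : Pairwise fun i j => f i * f j ≠ f j * f i) :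
    ∃ s : Finset G, pwNC s ∧ s.card = Nat.card ι := by
  have : Fintype ι := Fintype.ofFinite ι
  have hinj : f.Injective := fun i j hij => by
    by_contra hne
    exact hf hne (by rw [hij])
  refine ⟨Finset.univ.map ⟨f, hinj⟩, ?_, by simp⟩
  rintro _ ha _ hb hab
  obtain ⟨i, -, rfl⟩ := Finset.mem_map.1 ha
  obtain ⟨j, -, rfl⟩ := Finset.mem_map.1 hb
  exact hf (fun hij => hab (by rw [hij]))

namespace Projectivization

variable {K V : Type*} [Field K] [AddCommGroup V] [Module K V]

theorem card_le_of_pairwise_linearIndependent [Nontrivial V] [Finite V] {ι : Type*}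
    (s : Finset ι) (v : ι → V)
    (hv : (s : Set ι).Pairwise fun i j => LinearIndependent K ![v i, v j]) :
    s.card ≤ Nat.card (ℙ K V) := by
  rcases le_or_gt s.card 1 with hs | hs
  · exact hs.trans Nat.card_pos
  have hv0 : ∀ i ∈ s, v i ≠ 0 := fun i hi => by
    obtain ⟨j, hj, hji⟩ := Finset.exists_mem_ne hs i
    simpa using (hv hi hj hji.symm).ne_zero 0
  have hinj : Function.Injective fun i : s => mk K (v i) (hv0 i i.2) := by
    rintro ⟨i, hi⟩ ⟨j, hj⟩ hij
    by_contra hne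
    obtain ⟨a, ha⟩ := (mk_eq_mk_iff' K _ _ _ _).1 hij.symm
    have := (LinearIndependent.pair_iff.1 (hv hi hj fun h => hne (Subtype.ext h))) (-a) 1
    simp [← ha] at this
  simpa using Nat.card_le_card_of_injective _ hinj

theorem card_fin_three [Finite K] :
    Nat.card (ℙ K (Fin 3 → K)) = Nat.card K ^ 2 + Nat.card K + 1 := by
  rw [card_of_finrank K (Fin 3 → K) (Module.finrank_fin_fun K)]
  simp only [Finset.sum_range_succ, Finset.sum_range_zero]
  ring

end Projectivization

namespace Matrix

section CommRing

variable {R : Type*} [CommRing R]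

/-- Coordinates of a `2 × 2` matrix modulo scalar matrices, chosen so that the commutator becomes
the cross product (the isomorphism `𝔰𝔩₂ ≅ 𝔰𝔬₃`). -/
def projCoords (x : Matrix (Fin 2) (Fin 2) R) : Fin 3 → R :=
  ![x 0 1, x 1 0, x 0 0 - x 1 1]

theorem mul_sub_mul_eq_projCoords_cross (x y : Matrix (Fin 2) (Fin 2) R) :
    x * y - y * x =
      let w := projCoords x ⨯₃ projCoords y
      !![w 2, w 1; w 0, -w 2] := by
  ext i j
  fin_cases i <;> fin_cases j <;> simp [mul_apply, projCoords, cross_apply] <;> ring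

theorem mul_comm_iff_projCoords_cross_eq_zero {x y : Matrix (Fin 2) (Fin 2) R} :
    x * y = y * x ↔ projCoords x ⨯₃ projCoords y = 0 := by
  rw [← sub_eq_zero, mul_sub_mul_eq_projCoords_cross]
  simp [← Matrix.ext_iff, funext_iff, Fin.forall_fin_succ]
  tauto

end CommRing

namespace GeneralLinearGroup

section CommRing

variable {n R : Type*} [Fintype n] [DecidableEq n] [CommRing R]

theorem mk_commute_of_mul_comm {g h : GL n R} (hgh : (g * h : Matrix n n R) = h * g) :
    (g * h : GL n R ⧸ Subgroup.center (GL n R)) = h * g := by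
  rw [← QuotientGroup.mk_mul, ← QuotientGroup.mk_mul, (Units.ext hgh : g * h = h * g)]

theorem exists_mul_eq_smul_mul_of_mk_commute {g h : GL n R}
    (hgh : (g * h : GL n R ⧸ Subgroup.center (GL n R)) = h * g) :
    ∃ c : R, (h * g : Matrix n n R) = c • (g * h : Matrix n n R) := by
  rw [← QuotientGroup.mk_mul, ← QuotientGroup.mk_mul, QuotientGroup.eq,
    mem_center_iff_val_mem_range_scalar] at hgh
  obtain ⟨c, hc⟩ := hgh
  refine ⟨c, ?_⟩
  rw [← Units.val_mul, ← Units.val_mul, ← mul_inv_cancel_left (g * h) (h * g),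
    Units.val_mul (g * h), ← hc]
  simp [smul_eq_mul_diagonal]

end CommRing

variable {F : Type*} [Field F]

theorem eq_one_of_mul_eq_smul_mul {g h : GL (Fin 2) F} {c : F}
    (hc : (h * g : Matrix (Fin 2) (Fin 2) F) = c • (g * h : Matrix (Fin 2) (Fin 2) F))
    (htr : (2 : F) ≠ 0 → trace (g : Matrix (Fin 2) (Fin 2) F) ≠ 0) : c = 1 := by
  by_cases h2 : (2 : F) = 0
  · have hdet := congrArg Matrix.det hc
    rw [det_smul, det_mul, det_mul, Fintype.card_fin, mul_comm (Matrix.det _)] at hdet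
    have hsq : c ^ 2 = 1 := (mul_eq_right₀ (mul_ne_zero g.det_ne_zero h.det_ne_zero)).1 hdet.symm
    have : (c - 1) ^ 2 = 0 := by linear_combination hsq + (1 - c) * h2
    exact sub_eq_zero.1 (pow_eq_zero_iff two_ne_zero |>.1 this)
  · have hconj : (h * g * (h⁻¹ : GL (Fin 2) F) : Matrix (Fin 2) (Fin 2) F) = c • g := by
      rw [hc, smul_mul, Matrix.mul_assoc, ← Units.val_mul h, mul_inv_cancel, Units.val_one,
        Matrix.mul_one]
    have htrace : trace (h * g * (h⁻¹ : GL (Fin 2) F) : Matrix (Fin 2) (Fin 2) F) =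
        trace (g : Matrix (Fin 2) (Fin 2) F) := by
      rw [trace_mul_cycle, ← Units.val_mul, inv_mul_cancel, Units.val_one, Matrix.one_mul]
    rw [hconj, trace_smul, smul_eq_mul] at htrace
    exact (mul_eq_right₀ (htr h2)).1 htrace

theorem mul_comm_of_mk_commute {g h : GL (Fin 2) F}
    (htr : (2 : F) ≠ 0 → trace (g : Matrix (Fin 2) (Fin 2) F) ≠ 0)
    (hgh : (g * h : GL (Fin 2) F ⧸ Subgroup.center (GL (Fin 2) F)) = h * g) :
    (g * h : Matrix (Fin 2) (Fin 2) F) = h * g := by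
  obtain ⟨c, hc⟩ := exists_mul_eq_smul_mul_of_mk_commute hgh
  rw [hc, eq_one_of_mul_eq_smul_mul hc htr, one_smul]

theorem exists_projCoords_eq_trace_ne_zero [Fintype F] (hq : 3 < Fintype.card F)
    (v : Fin 3 → F) :
    ∃ g : GL (Fin 2) F, projCoords (g : Matrix (Fin 2) (Fin 2) F) = v ∧
      ((2 : F) ≠ 0 → trace (g : Matrix (Fin 2) (Fin 2) F) ≠ 0) := by
  -- `P t ≠ 0` makes `!![t + v 2, v 0; v 1, t]` invertible and, if `2 ≠ 0`, not traceless
  let P : F[X] := (X * (X + C (v 2)) - C (v 0 * v 1)) * (X + C (v 2 / 2))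
  have hP : P.Monic := by simp only [P]; monicity!
  have hdeg : P.natDegree ≤ 3 := by simp only [P]; compute_degree
  obtain ⟨t, ht⟩ := exists_eval_ne_zero_of_natDegree_lt_card P hP.ne_zero
    (by rw [Cardinal.mk_fintype]; exact_mod_cast hdeg.trans_lt hq)
  simp only [P, eval_mul, eval_sub, eval_add, eval_X, eval_C] at ht
  obtain ⟨hdet, hhalf⟩ := mul_ne_zero_iff.1 ht
  refine ⟨mkOfDetNeZero !![t + v 2, v 0; v 1, t] (by rwa [det_fin_two_of, mul_comm]), ?_,
    fun h2 htr => hhalf ?_⟩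
  · ext i
    fin_cases i <;> simp [projCoords]
  · simp only [val_mkOfDetNeZero, trace_fin_two_of] at htr
    field_simp
    linear_combination htr

end GeneralLinearGroup

end Matrix

section PGL2

variable {F : Type*} [Field F]

local notation "PGL₂" => GL (Fin 2) F ⧸ Subgroup.center (GL (Fin 2) F)

theorem linearIndependent_projCoords_out {a b : PGL₂} (hab : a * b ≠ b * a) :
    LinearIndependent F ![projCoords (a.out : Matrix (Fin 2) (Fin 2) F),
      projCoords (b.out : Matrix (Fin 2) (Fin 2) F)] := by
  rw [← crossProduct_ne_zero_iff_linearIndependent]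
  intro hcross
  have hcomm := GeneralLinearGroup.mk_commute_of_mul_comm
    (mul_comm_iff_projCoords_cross_eq_zero.2 hcross)
  simp only [QuotientGroup.out_eq'] at hcomm
  exact hab hcomm

theorem card_le_of_pwNC [Finite F] {s : Finset PGL₂} (hs : pwNC s) :
    s.card ≤ Nat.card F ^ 2 + Nat.card F + 1 := by
  rw [← Projectivization.card_fin_three]
  exact Projectivization.card_le_of_pairwise_linearIndependent s
    (fun a => projCoords (a.out : Matrix (Fin 2) (Fin 2) F))
    fun _ ha _ hb hab => linearIndependent_projCoords_out (hs ha hb hab)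

theorem exists_pwNC_card_eq [Fintype F] (hq : 3 < Fintype.card F) :
    ∃ s : Finset PGL₂, pwNC s ∧ s.card = Fintype.card F ^ 2 + Fintype.card F + 1 := by
  choose g hg htr using fun p : ℙ F (Fin 3 → F) =>
    GeneralLinearGroup.exists_projCoords_eq_trace_ne_zero hq p.rep
  rw [← Nat.card_eq_fintype_card, ← Projectivization.card_fin_three]
  refine exists_pwNC_card_eq_of_pairwise (fun p => (g p : PGL₂)) fun p p' hne hcomm => ?_
  have hcross := mul_comm_iff_projCoords_cross_eq_zero.1
    (GeneralLinearGroup.mul_comm_of_mk_commute (htr p) hcomm)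
  rw [hg, hg] at hcross
  exact crossProduct_ne_zero_iff_linearIndependent.2
    (Projectivization.linearIndependent_pair_iff_ne.2 hne) hcross

end PGL2

/-- For every prime power q > 3, ω(PGL(2,q)) = q² + q + 1, where
PGL(2,q) is the quotient of GL(2,q) by its center and q is the cardinality
of the finite field. -/
theorem stmt4 (F : Type*) [Field F] [Fintype F] (hq : 3 < Fintype.card F) :
    omegaNC (Matrix.GeneralLinearGroup (Fin 2) F ⧸
      Subgroup.center (Matrix.GeneralLinearGroup (Fin 2) F)) =
      Fintype.card F ^ 2 + Fintype.card F + 1 :=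
  omegaNC_eq (fun _ hs => Nat.card_eq_fintype_card (α := F) ▸ card_le_of_pwNC hs)
    (exists_pwNC_card_eq hq)
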